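/- Let V₀ = λI with λ > 0 and V_t = V_{t−1} + Σ_{i=1}^k x_t(i)x_t(i)ᵀ where ‖x_t(i)‖₂ ≤ L. Then log det(V_T) − log det(λI) ≥ (1/(2k)) · Σ_{t=1}^T Σ_{i=1}^k min(1, k·x_t(i)ᵀV_{t−1}^{-1}x_t(i)). -/

import Mathlib

/-!
Write `S = ∑ᵢ xᵢxᵢᵀ` for one batch and `τ = tr(V⁻¹S) = ∑ᵢ xᵢᵀV⁻¹xᵢ`. Factoring `S = BᵀB` gives
`det(V + S) = det V · det(1 + BV⁻¹Bᵀ)` with `BV⁻¹Bᵀ ⪰ 0`, and for a positive semidefinite `M`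
the eigenvalues give `det(1 + M) = ∏(1 + μⱼ) ≥ 1 + ∑μⱼ = 1 + tr M`. So every batch raises
`log det V` by at least `log(1 + τ) ≥ min(1, τ)/2`, while
`∑ᵢ min(1, k·xᵢᵀV⁻¹xᵢ) ≤ min(k, kτ) = k·min(1, τ)`. Summing over the batches telescopes.
-/

open Matrix Finset

lemma Finset.one_add_sum_le_prod_one_add {ι R : Type*} [CommSemiring R] [PartialOrder R]
    [IsOrderedRing R] (s : Finset ι) {f : ι → R} (hf : ∀ i ∈ s, 0 ≤ f i) :
    1 + ∑ i ∈ s, f i ≤ ∏ i ∈ s, (1 + f i) := by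
  induction s using Finset.cons_induction with
  | empty => simp
  | cons a s ha ih =>
    have ha₀ : 0 ≤ f a := hf a (mem_cons_self a s)
    have hs := ih fun i hi => hf i (mem_cons_of_mem hi)
    have hs₀ : 0 ≤ ∑ i ∈ s, f i := sum_nonneg fun i hi => hf i (mem_cons_of_mem hi)
    have ha₁ : 0 ≤ 1 + f a := add_nonneg zero_le_one ha₀
    rw [sum_cons, prod_cons]
    calc 1 + (f a + ∑ i ∈ s, f i) ≤ 1 + (f a + ∑ i ∈ s, f i) + f a * ∑ i ∈ s, f i :=
          le_add_of_nonneg_right (mul_nonneg ha₀ hs₀)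
      _ = (1 + f a) * (1 + ∑ i ∈ s, f i) := by ring
      _ ≤ (1 + f a) * ∏ i ∈ s, (1 + f i) := by gcongr

lemma Finset.sum_min_one_card_mul_le {ι : Type*} (s : Finset ι) (u : ι → ℝ) :
    ∑ i ∈ s, min 1 (#s * u i) ≤ #s * min 1 (∑ i ∈ s, u i) := by
  calc ∑ i ∈ s, min 1 (#s * u i) ≤ min (∑ _i ∈ s, (1 : ℝ)) (∑ i ∈ s, #s * u i) := sum_min_le
    _ = #s * min 1 (∑ i ∈ s, u i) := by
      rw [sum_const, nsmul_one, ← mul_sum, mul_min_of_nonneg _ _ (Nat.cast_nonneg _), mul_one]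

lemma Real.half_min_one_le_log_one_add {u : ℝ} (hu : 0 ≤ u) :
    min 1 u / 2 ≤ Real.log (1 + u) := by
  have hpos : 0 < 1 + u := by linarith
  have hlog : u / (1 + u) ≤ Real.log (1 + u) := by
    have hsub : 1 - (1 + u)⁻¹ = u / (1 + u) := by field_simp; ring
    exact hsub ▸ Real.one_sub_inv_le_log_of_pos hpos
  refine le_trans ?_ hlog
  rw [div_le_div_iff₀ two_pos hpos]
  rcases le_total u 1 with h | h
  · rw [min_eq_right h]; nlinarith
  · rw [min_eq_left h]; linarith

namespace Matrix

variable {n : Type*} [Fintype n] [DecidableEq n]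

lemma IsHermitian.det_one_add {M : Matrix n n ℝ} (hM : M.IsHermitian) :
    (1 + M).det = ∏ i, (1 + hM.eigenvalues i) := by
  have hsa : IsSelfAdjoint M := hM
  have hcfc : 1 + M = cfc (fun t : ℝ => 1 + t) M := by
    rw [cfc_add .., cfc_const_one .., cfc_id' ..]
  rw [hcfc, hM.cfc_eq, IsHermitian.cfc]
  simp [-Unitary.conjStarAlgAut_apply]

lemma PosSemidef.one_add_trace_le_det_one_add {M : Matrix n n ℝ} (hM : M.PosSemidef) :
    1 + M.trace ≤ (1 + M).det := by
  rw [hM.isHermitian.det_one_add, hM.isHermitian.trace_eq_sum_eigenvalues]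
  exact one_add_sum_le_prod_one_add _ fun i _ => hM.eigenvalues_nonneg i

open scoped MatrixOrder in
lemma PosDef.det_mul_one_add_trace_le_det_add {P S : Matrix n n ℝ} (hP : P.PosDef)
    (hS : S.PosSemidef) : P.det * (1 + (P⁻¹ * S).trace) ≤ (P + S).det := by
  obtain ⟨B, rfl⟩ := CStarAlgebra.nonneg_iff_eq_star_mul_self.mp hS.nonneg
  have hfactor : P + star B * B = P * (1 + P⁻¹ * star B * B) := by
    rw [mul_add, mul_one, ← mul_assoc, ← mul_assoc,
      mul_nonsing_inv _ ((isUnit_iff_isUnit_det P).mp hP.isUnit), one_mul]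
  have hdet : (1 + P⁻¹ * star B * B).det = (1 + B * (P⁻¹ * star B)).det :=
    det_one_add_mul_comm _ _
  have htrace : (P⁻¹ * (star B * B)).trace = (B * P⁻¹ * star B).trace := by
    rw [← mul_assoc, trace_mul_comm, mul_assoc]
  have hpsd : (B * P⁻¹ * star B).PosSemidef :=
    hP.inv.posSemidef.mul_mul_conjTranspose_same B
  rw [hfactor, det_mul, hdet, htrace, ← mul_assoc]
  exact mul_le_mul_of_nonneg_left hpsd.one_add_trace_le_det_one_add hP.det_pos.le

lemma trace_inv_mul_sum_vecMulVec {ι : Type*} (P : Matrix n n ℝ) (s : Finset ι)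
    (x : ι → n → ℝ) :
    (P⁻¹ * ∑ i ∈ s, vecMulVec (x i) (x i)).trace = ∑ i ∈ s, x i ⬝ᵥ P⁻¹ *ᵥ x i := by
  rw [mul_sum, trace_sum]
  exact sum_congr rfl fun i _ => by rw [mul_vecMulVec, trace_vecMulVec, dotProduct_comm]

omit [DecidableEq n] in
lemma posSemidef_sum_vecMulVec {ι : Type*} (s : Finset ι) (x : ι → n → ℝ) :
    (∑ i ∈ s, vecMulVec (x i) (x i)).PosSemidef :=
  posSemidef_sum s fun i _ => posSemidef_vecMulVec_self_star (x i)

lemma PosDef.sum_min_one_le_log_det_add_sum_vecMulVec {ι : Type*} {P : Matrix n n ℝ}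
    (hP : P.PosDef) (s : Finset ι) (x : ι → n → ℝ) :
    1 / (2 * #s) * ∑ i ∈ s, min 1 (#s * (x i ⬝ᵥ P⁻¹ *ᵥ x i)) ≤
      Real.log (P + ∑ i ∈ s, vecMulVec (x i) (x i)).det - Real.log P.det := by
  set τ := ∑ i ∈ s, x i ⬝ᵥ P⁻¹ *ᵥ x i
  have hτ : 0 ≤ τ := sum_nonneg fun i _ => by
    simpa using hP.inv.posSemidef.dotProduct_mulVec_nonneg (x i)
  have hdet := hP.det_mul_one_add_trace_le_det_add (posSemidef_sum_vecMulVec s x)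
  rw [trace_inv_mul_sum_vecMulVec] at hdet
  have hcard : 1 / (2 * #s) * (#s * min 1 τ) ≤ min 1 τ / 2 := by
    rcases eq_or_ne (#s : ℝ) 0 with h | h
    · simp only [h, mul_zero, div_zero, zero_mul]; positivity
    · exact (by field_simp : 1 / (2 * #s) * (#s * min 1 τ) = min 1 τ / 2).le
  calc 1 / (2 * #s) * ∑ i ∈ s, min 1 (#s * (x i ⬝ᵥ P⁻¹ *ᵥ x i))
      ≤ 1 / (2 * #s) * (#s * min 1 τ) := by gcongr; exact sum_min_one_card_mul_le s _
    _ ≤ min 1 τ / 2 := hcard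
    _ ≤ Real.log (1 + τ) := Real.half_min_one_le_log_one_add hτ
    _ ≤ _ := by
      rw [le_sub_iff_add_le', ← Real.log_mul hP.det_pos.ne' (by positivity)]
      exact Real.log_le_log (by have := hP.det_pos; positivity) hdet

end Matrix

theorem logDet_potential_lower_bound_general {d k T : ℕ}
    (lam : ℝ) (hlam : 0 < lam) (x : ℕ → ℕ → (Fin d → ℝ))
    (V : ℕ → Matrix (Fin d) (Fin d) ℝ)
    (hV0 : V 0 = lam • (1 : Matrix (Fin d) (Fin d) ℝ))
    (hVs : ∀ t, V (t + 1) = V t + ∑ i ∈ Finset.range k, vecMulVec (x t i) (x t i)) :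
    Real.log (V T).det - Real.log (lam • (1 : Matrix (Fin d) (Fin d) ℝ)).det ≥
      (1 / (2 * (k : ℝ))) * ∑ t ∈ Finset.range T, ∑ i ∈ Finset.range k,
        min 1 ((k : ℝ) * (x t i ⬝ᵥ (V t)⁻¹ *ᵥ x t i)) := by
  have hPD : ∀ t, (V t).PosDef := by
    intro t
    induction t with
    | zero => rw [hV0]; exact PosDef.one.smul hlam
    | succ t ih => rw [hVs t]; exact ih.add_posSemidef (posSemidef_sum_vecMulVec _ _)
  rw [ge_iff_le, ← hV0, mul_sum, ← sum_range_sub fun t => Real.log (V t).det]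
  refine sum_le_sum fun t _ => ?_
  simpa [hVs t] using (hPD t).sum_min_one_le_log_det_add_sum_vecMulVec (range k) (x t)

theorem logDet_potential_lower_bound {d k T : ℕ} (hk : 0 < k)
    (L lam : ℝ) (hlam : 0 < lam) (x : ℕ → ℕ → (Fin d → ℝ))
    (hL : ∀ t ∈ Finset.range T, ∀ i ∈ Finset.range k, Real.sqrt (∑ j, (x t i j) ^ 2) ≤ L)
    (V : ℕ → Matrix (Fin d) (Fin d) ℝ)
    (hV0 : V 0 = lam • (1 : Matrix (Fin d) (Fin d) ℝ))
    (hVs : ∀ t, V (t + 1) = V t + ∑ i ∈ Finset.range k, vecMulVec (x t i) (x t i)) :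
    Real.log (V T).det - Real.log (lam • (1 : Matrix (Fin d) (Fin d) ℝ)).det ≥
      (1 / (2 * (k : ℝ))) * ∑ t ∈ Finset.range T, ∑ i ∈ Finset.range k,
        min 1 ((k : ℝ) * (x t i ⬝ᵥ (V t)⁻¹ *ᵥ x t i)) :=
  logDet_potential_lower_bound_general lam hlam x V hV0 hVs
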